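/- arXiv:1507.03737 — 8 statements merged into one kernel-verified Lean document; each statement's English description precedes it below -/
import Mathlib

section
/- Let p be an odd prime, let K be an algebraically closed field of characteristic p, and let c ∈ K with c ≠ 0. Then the polynomial f = (X^p − X)(Y^p − Y) − c is irreducible in the polynomial ring K[X,Y]. -/
/-!
Over `K[x]`, the polynomial is `(y^p - y) g - c` in `y`, with `g = x^p - x`. Its constant
coefficient `-c` is a unit, so it is primitive, and by Gauss's lemma it suffices to prove
irreducibility over `K(x)`, where it is `g` times the Artin–Schreier polynomial
`y^p - y - c/g`.

An Artin–Schreier polynomial `y^p - y - a` is irreducible unless `a = b^p - b` for some `b`: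
its roots are `θ + i` with `i` in the prime field, so the roots of a monic factor of degree
`0 < d < p` sum to `d θ + n` with `n` in the prime field, which puts `θ` in the base field.

Finally `c/g` has a simple pole at `x = 0`, while `b^p - b` has either no pole there or a pole
of order `p` times that of `b`.
-/

section ArtinSchreier

open Polynomial

variable {F : Type*} [Field F] {p : ℕ} [Fact p.Prime] [CharP F p]

theorem sub_mem_bot_of_pow_char_sub_self_eq {x y : F} (h : x ^ p - x = y ^ p - y) :
    x - y ∈ (⊥ : Subfield F) := by
  rw [Subfield.mem_bot_iff_pow_eq_self F p, sub_pow_char]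
  linear_combination h

theorem sum_roots_map_mem_fieldRange {L : Type*} [Field L] (φ : F →+* L) {u : F[X]}
    (hu : u.Monic) (hsplit : (u.map φ).Splits) : (u.map φ).roots.sum ∈ φ.fieldRange := by
  rw [← neg_neg (u.map φ).roots.sum, ← hsplit.nextCoeff_eq_neg_sum_roots_of_monic (hu.map φ),
    nextCoeff_map φ.injective]
  exact ⟨-u.nextCoeff, by simp⟩

theorem exists_pow_char_sub_self_eq_of_monic_dvd {a : F} {u : F[X]} (hu : u.Monic)
    (hdvd : u ∣ X ^ p - X - C a) (hd0 : 0 < u.natDegree) (hdp : u.natDegree < p) :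
    ∃ b : F, b ^ p - b = a := by
  let φ := algebraMap F (AlgebraicClosure F)
  have hsplit : (u.map φ).Splits := IsAlgClosed.splits _
  have hroot : ∀ r ∈ (u.map φ).roots, r ^ p - r = φ a := by
    intro r hr
    have := eval_eq_zero_of_dvd_of_eval_eq_zero (Polynomial.map_dvd φ hdvd)
      ((mem_roots (hu.map φ).ne_zero).1 hr)
    simpa [sub_eq_zero] using this
  obtain ⟨θ, hθ⟩ : ∃ θ, θ ∈ (u.map φ).roots := by
    obtain ⟨θ, hθ⟩ := IsAlgClosed.exists_root (u.map φ)
      (natDegree_pos_iff_degree_pos.1 (by rwa [natDegree_map])).ne'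
    exact ⟨θ, (mem_roots (hu.map φ).ne_zero).2 hθ⟩
  have hdθ : (u.natDegree : AlgebraicClosure F) * θ ∈ φ.fieldRange := by
    have hsum : (u.natDegree : AlgebraicClosure F) * θ
        = (u.map φ).roots.sum - ((u.map φ).roots.map (· - θ)).sum := by
      rw [Multiset.sum_map_sub, Multiset.map_id', Multiset.map_const', Multiset.sum_replicate,
        ← hsplit.natDegree_eq_card_roots, natDegree_map, nsmul_eq_mul, sub_sub_cancel]
    rw [hsum]
    refine sub_mem (sum_roots_map_mem_fieldRange φ hu hsplit) (Subfield.multiset_sum_mem _ _ ?_)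
    simp only [Multiset.mem_map]
    rintro _ ⟨r, hr, rfl⟩
    exact (bot_le : ⊥ ≤ φ.fieldRange)
      (sub_mem_bot_of_pow_char_sub_self_eq ((hroot r hr).trans (hroot θ hθ).symm))
  have hd : (u.natDegree : AlgebraicClosure F) ≠ 0 := by
    rw [Ne, CharP.cast_eq_zero_iff _ p]
    exact Nat.not_dvd_of_pos_of_lt hd0 hdp
  obtain ⟨b, hb⟩ : θ ∈ φ.fieldRange := by
    rw [← inv_mul_cancel_left₀ hd θ]
    exact mul_mem (inv_mem (natCast_mem _ _)) hdθ
  exact ⟨b, φ.injective (by simp [hb, hroot θ hθ])⟩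

theorem X_pow_sub_X_sub_C_irreducible {a : F} (ha : ∀ b : F, b ^ p - b ≠ a) :
    Irreducible (X ^ p - X - C a : F[X]) := by
  have hp : 1 < p := (Fact.out : p.Prime).one_lt
  have hmonic : (X ^ p - X - C a : F[X]).Monic := by
    rw [sub_sub]
    exact monic_X_pow_sub (by rw [degree_X_add_C]; exact_mod_cast hp)
  have hdeg : (X ^ p - X - C a : F[X]).natDegree = p := by
    rw [sub_sub, natDegree_sub_eq_left_of_natDegree_lt] <;> simp [hp]
  rw [hmonic.irreducible_iff_natDegree]
  refine ⟨fun h => by simp [h] at hdeg; omega, fun u v hu hv huv => ?_⟩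
  rw [← huv, hu.natDegree_mul hv] at hdeg
  by_contra! h
  obtain ⟨b, hb⟩ := exists_pow_char_sub_self_eq_of_monic_dvd hu (huv ▸ dvd_mul_right u v)
    (Nat.pos_of_ne_zero h.1) (by omega)
  exact ha b hb

end ArtinSchreier

section Valuation

variable {L Γ : Type*} [Field L] [LinearOrderedCommGroupWithZero Γ]

theorem Valuation.pow_sub_self_ne (v : Valuation L Γ) {p : ℕ} (hp : 1 < p) {a : L}
    (ha : 1 < v a) (hpow : ∀ γ : Γ, γ ^ p ≠ v a) (b : L) : b ^ p - b ≠ a := by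
  rintro rfl
  rcases le_or_gt (v b) 1 with hb | hb
  · refine ha.not_ge ((v.map_sub _ _).trans (max_le ?_ hb))
    rw [map_pow]
    exact pow_le_one₀ zero_le hb
  · have hlt : v b < v (b ^ p) := by
      rw [map_pow]
      exact lt_self_pow₀ hb hp
    exact hpow (v b) (by rw [v.map_sub_eq_of_lt_left hlt, map_pow])

end Valuation

open WithZero in
theorem WithZero.exp_one_ne_pow {p : ℕ} (hp : 1 < p) (γ : ℤᵐ⁰) : γ ^ p ≠ exp 1 := by
  intro h
  have hγ : γ ≠ 0 := by
    rintro rfl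
    exact exp_ne_zero (h.symm.trans (zero_pow (by omega)))
  rw [← exp_log hγ, ← exp_nsmul, exp_inj, nsmul_eq_mul] at h
  have := Int.eq_one_or_neg_one_of_mul_eq_one h
  omega

section RatFunc

open Polynomial IsDedekindDomain.HeightOneSpectrum WithZero

theorem Polynomial.valuation_idealX_C_div_X_pow_sub_X {K : Type*} [Field K] {p : ℕ} (hp : 1 < p)
    {c : K} (hc : c ≠ 0) :
    (idealX K).valuation (RatFunc K) (algebraMap K[X] (RatFunc K) (C c) /
      algebraMap K[X] (RatFunc K) (X ^ p - X)) = exp 1 := by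
  have hX : (X ^ p - X : K[X]) = X * (X ^ (p - 1) - 1) := by
    rw [mul_sub, ← pow_succ', Nat.sub_add_cancel hp.le, mul_one]
  have hunit : ∀ f : K[X], f.coeff 0 ≠ 0 → (idealX K).intValuation f = 1 := by
    intro f hf
    rw [intValuation_eq_one_iff, idealX_span, Ideal.mem_span_singleton, X_dvd_iff]
    exact hf
  rw [map_div₀, valuation_of_algebraMap, valuation_of_algebraMap, hX, map_mul,
    intValuation_singleton _ X_ne_zero (idealX_span K), hunit _ (by simpa using hc),
    hunit _ (by rw [coeff_sub, coeff_X_pow, if_neg (by omega), coeff_one_zero]; simp)]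
  simp

theorem Polynomial.pow_sub_self_ne_C_div_X_pow_sub_X {K : Type*} [Field K] {p : ℕ} (hp : 1 < p)
    {c : K} (hc : c ≠ 0) (b : RatFunc K) :
    b ^ p - b ≠ algebraMap K[X] (RatFunc K) (C c) / algebraMap K[X] (RatFunc K) (X ^ p - X) := by
  have hval := valuation_idealX_C_div_X_pow_sub_X hp hc
  refine ((idealX K).valuation (RatFunc K)).pow_sub_self_ne hp ?_ ?_ b <;> rw [hval]
  · rw [← exp_zero, exp_lt_exp]
    exact one_pos
  · exact exp_one_ne_pow hp

end RatFunc

section GaussLemma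

open Polynomial

theorem Polynomial.isPrimitive_of_isUnit_coeff {R : Type*} [CommSemiring R] {f : R[X]} {n : ℕ}
    (h : IsUnit (f.coeff n)) : f.IsPrimitive :=
  fun r hr => isUnit_of_dvd_unit ((C_dvd_iff_dvd_coeff r f).1 hr n) h

theorem irreducible_X_pow_sub_X_mul_C_sub_C {R L : Type*} [CommRing R] [IsDomain R]
    [IsGCDMonoid R] [Field L] [Algebra R L] [IsFractionRing R L] {p : ℕ} [Fact p.Prime]
    [CharP L p] {g c : R} (hg : g ≠ 0) (hc : IsUnit c)
    (h : ∀ b : L, b ^ p - b ≠ algebraMap R L c / algebraMap R L g) :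
    Irreducible ((X ^ p - X) * C g - C c : R[X]) := by
  have hp : 0 ≠ p := (Fact.out : p.Prime).ne_zero.symm
  have hprim : ((X ^ p - X) * C g - C c : R[X]).IsPrimitive :=
    isPrimitive_of_isUnit_coeff (n := 0) (by simpa [coeff_X_pow, hp] using hc.neg)
  have hg' : algebraMap R L g ≠ 0 := IsFractionRing.to_map_ne_zero_of_mem_nonZeroDivisors
    (mem_nonZeroDivisors_of_ne_zero hg)
  have hmap : ((X ^ p - X) * C g - C c : R[X]).map (algebraMap R L) = C (algebraMap R L g) *
      (X ^ p - X - C (algebraMap R L c / algebraMap R L g)) := by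
    simp only [Polynomial.map_sub, Polynomial.map_mul, Polynomial.map_pow, map_X, map_C]
    rw [mul_sub, ← C_mul, mul_div_cancel₀ _ hg']
    ring
  rw [hprim.irreducible_iff_irreducible_map_fraction_map (K := L), hmap,
    irreducible_isUnit_mul (isUnit_C.2 hg'.isUnit)]
  exact X_pow_sub_X_sub_C_irreducible h

end GaussLemma

open MvPolynomial

theorem artin_mumford_poly_irreducible_general (p : ℕ) (hp : p.Prime)
    (K : Type*) [Field K] [CharP K p] (c : K) (hc : c ≠ 0) :
    Irreducible ((X 0 ^ p - X 0) * (X 1 ^ p - X 1) - C c : MvPolynomial (Fin 2) K) := by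
  have : Fact p.Prime := ⟨hp⟩
  have : CharP (RatFunc K) p := charP_of_injective_algebraMap' K p
  let e : MvPolynomial (Fin 2) K ≃ₐ[K] Polynomial (Polynomial K) :=
    (finSuccEquiv K 1).trans (Polynomial.mapAlgEquiv (uniqueAlgEquiv K (Fin 1)))
  have he : e ((X 0 ^ p - X 0) * (X 1 ^ p - X 1) - C c) =
      (Polynomial.X ^ p - Polynomial.X) * Polynomial.C (Polynomial.X ^ p - Polynomial.X) -
        Polynomial.C (Polynomial.C c) := by
    have hX0 : e (X 0) = Polynomial.X := by
      simp only [e, AlgEquiv.trans_apply, finSuccEquiv_X_zero]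
      simp
    have hX1 : e (X 1) = Polynomial.C Polynomial.X := by
      rw [← Fin.succ_zero_eq_one]
      simp only [e, AlgEquiv.trans_apply, finSuccEquiv_X_succ]
      simp
    rw [← algebraMap_eq, map_sub, map_mul, e.commutes]
    simp [hX0, hX1]
  rw [← MulEquiv.irreducible_iff e, he]
  exact irreducible_X_pow_sub_X_mul_C_sub_C (L := RatFunc K)
    (FiniteField.X_pow_card_sub_X_ne_zero K hp.one_lt) (Polynomial.isUnit_C.2 hc.isUnit)
    (Polynomial.pow_sub_self_ne_C_div_X_pow_sub_X hp.one_lt hc)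

/-- For an odd prime `p`, an algebraically closed field `K` of characteristic `p`, and
`c ∈ K` nonzero, the polynomial `(X^p - X)(Y^p - Y) - c` is irreducible in `K[X,Y]`. -/
theorem artin_mumford_poly_irreducible (p : ℕ) (hp : p.Prime) (hodd : Odd p)
    (K : Type*) [Field K] [IsAlgClosed K] [CharP K p] (c : K) (hc : c ≠ 0) :
    Irreducible ((X 0 ^ p - X 0) * (X 1 ^ p - X 1) - C c : MvPolynomial (Fin 2) K) :=
  artin_mumford_poly_irreducible_general p hp K c hc
end

section
/- Let p be an odd prime, K an algebraically closed field of characteristic p, and c a nonzero element of K. Let F be the field of fractions of the integral domain K[X,Y]/((X^p − X)(Y^p − Y) − c), and let x, y denote the images of X, Y in F. Then the element u = x·y^p − x^p·y is not of the form w^p − w for any w ∈ F; that is, for every w ∈ F one has w^p − w ≠ x·y^p − x^p·y. -/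
open MvPolynomial

/-- The polynomial `(X^p - X)(Y^p - Y) - c` defining the Artin–Mumford curve. -/
noncomputable def amPoly (p : ℕ) (K : Type*) [Field K] (c : K) : MvPolynomial (Fin 2) K :=
  (X 0 ^ p - X 0) * (X 1 ^ p - X 1) - C c

/-- The coordinate ring `K[X,Y]/((X^p - X)(Y^p - Y) - c)` of the Artin–Mumford curve. -/
abbrev amRing (p : ℕ) (K : Type*) [Field K] (c : K) : Type _ :=
  MvPolynomial (Fin 2) K ⧸ Ideal.span {amPoly p K c}

/-!
Since `t ↦ tᵖ - t` is additive and vanishes on `𝔽_p`, the translations `σ : y ↦ y + 1` and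
`τ : x ↦ x + 1` preserve the curve and induce commuting automorphisms of `F`. If `wᵖ - w = u`,
then `σ u - u = x - xᵖ` and `τ u - u = yᵖ - y` are again of the form `sᵖ - s`, so
`σ w = w - x + α` and `τ w = w + y + β` with `α, β` in the prime field. Then
`σ (τ w) - τ (σ w) = 2`, impossible in odd characteristic.
-/

section ArtinSchreier

variable {F : Type*} [Field F] {p : ℕ} [Fact p.Prime] [CharP F p]

lemma RingHom.apply_eq_self_of_pow_char_eq_self (σ : F →+* F) {v : F} (hv : v ^ p = v) :
    σ v = v := by
  obtain ⟨n, rfl⟩ := (mem_bot_iff_intCast p F).1 ((Subfield.mem_bot_iff_pow_eq_self F p).2 hv)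
  exact map_intCast σ n

/-- `σ w - w - s` is a root of `Xᵖ - X`, so it lies in the prime field. -/
lemma RingHom.apply_sub_sub_eq_self_of_map_pow_sub (σ τ : F →+* F) {w s : F}
    (hσ : σ (w ^ p - w) = w ^ p - w + (s ^ p - s)) : τ (σ w - w - s) = σ w - w - s := by
  refine τ.apply_eq_self_of_pow_char_eq_self ?_
  rw [sub_pow_char, sub_pow_char]
  rw [map_sub, map_pow] at hσ
  linear_combination hσ

theorem pow_char_sub_self_ne_of_commute (hp2 : p ≠ 2) {σ τ : F ≃+* F} (hστ : Commute σ τ)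
    {x y : F} (hσx : σ x = x) (hσy : σ y = y + 1) (hτx : τ x = x + 1) (hτy : τ y = y)
    (w : F) : w ^ p - w ≠ x * y ^ p - x ^ p * y := by
  intro hw
  have hodd : Odd p := (Fact.out : p.Prime).odd_of_ne_two hp2
  have hα := (σ : F →+* F).apply_sub_sub_eq_self_of_map_pow_sub τ (s := -x) (w := w) (by
    simp only [RingHom.coe_coe, hw, map_sub, map_mul, map_pow, hσx, hσy, add_pow_char,
      hodd.neg_pow]
    ring)
  have hβ := (τ : F →+* F).apply_sub_sub_eq_self_of_map_pow_sub σ (s := y) (w := w) (by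
    simp only [RingHom.coe_coe, hw, map_sub, map_mul, map_pow, hτx, hτy, add_pow_char]
    ring)
  simp only [RingHom.coe_coe] at hα hβ
  have hστw : σ (τ w) = σ w + (y + 1) + (τ w - w - y) := by
    conv_lhs => rw [show τ w = w + y + (τ w - w - y) by ring]
    rw [map_add, map_add, hσy, hβ]
  have hτσw : τ (σ w) = τ w - (x + 1) + (σ w - w - -x) := by
    conv_lhs => rw [show σ w = w - x + (σ w - w - -x) by ring]
    rw [map_add, map_sub, hτx, hα]
  have h2 : (2 : F) = 0 := by
    have := congrArg (· w) hστ.eq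
    simp only [RingAut.mul_apply, hστw, hτσw] at this
    linear_combination this
  exact Ring.two_ne_zero (by rwa [ringChar.eq F p]) h2

end ArtinSchreier

namespace MvPolynomial

variable {ι R : Type*} [CommRing R]

noncomputable def translate (a : ι → R) : MvPolynomial ι R ≃ₐ[R] MvPolynomial ι R :=
  AlgEquiv.ofAlgHom (aeval fun i => X i + C (a i)) (aeval fun i => X i - C (a i))
    (algHom_ext fun i => by simp) (algHom_ext fun i => by simp)

@[simp]
lemma translate_X (a : ι → R) (i : ι) : translate a (X i) = X i + C (a i) :=
  aeval_X _ _

@[simp]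
lemma translate_C (a : ι → R) (r : R) : translate a (C r) = C r :=
  (translate a).commutes r

lemma translate_translate (a b : ι → R) (q : MvPolynomial ι R) :
    translate a (translate b q) = translate (a + b) q := by
  have h : (translate a).toAlgHom.comp (translate b).toAlgHom = (translate (a + b)).toAlgHom :=
    algHom_ext fun i => by simp; ring
  exact AlgHom.congr_fun h q

lemma commute_translate (a b : ι → R) : Commute (translate a) (translate b) :=
  AlgEquiv.ext fun q => by
    rw [AlgEquiv.mul_apply, AlgEquiv.mul_apply, translate_translate, translate_translate, add_comm]

end MvPolynomial

section ArtinMumford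

variable {p : ℕ} [Fact p.Prime] {K : Type*} [Field K] [CharP K p] {c : K}
  {a b : Fin 2 → K}

lemma translate_amPoly (ha : ∀ i, a i ^ p = a i) : translate a (amPoly p K c) = amPoly p K c := by
  have hAS (i : Fin 2) :
      (X i + C (a i) : MvPolynomial (Fin 2) K) ^ p - (X i + C (a i)) = X i ^ p - X i := by
    rw [add_pow_char, ← C_pow, ha i]
    ring
  simp only [amPoly, map_sub, map_mul, map_pow, translate_X, translate_C, hAS]

variable (c) in
noncomputable def amTranslate (a : Fin 2 → K) (ha : ∀ i, a i ^ p = a i) :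
    amRing p K c ≃+* amRing p K c :=
  Ideal.quotientEquiv _ _ (translate a : MvPolynomial (Fin 2) K ≃+* MvPolynomial (Fin 2) K) (by
    rw [Ideal.map_span, Set.image_singleton]
    exact congrArg (fun q => Ideal.span {q}) (translate_amPoly ha).symm)

lemma amTranslate_mk (ha : ∀ i, a i ^ p = a i) (q : MvPolynomial (Fin 2) K) :
    amTranslate c a ha (Ideal.Quotient.mk _ q) = Ideal.Quotient.mk _ (translate a q) :=
  Ideal.quotientEquiv_mk _ _ _ _ q

lemma commute_amTranslate (ha : ∀ i, a i ^ p = a i) (hb : ∀ i, b i ^ p = b i) :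
    Commute (amTranslate c a ha) (amTranslate c b hb) := by
  ext r
  obtain ⟨q, rfl⟩ := Ideal.Quotient.mk_surjective r
  simp only [RingAut.mul_apply, amTranslate_mk]
  rw [← AlgEquiv.mul_apply, (commute_translate a b).eq, AlgEquiv.mul_apply]

variable (c) in
noncomputable def amFieldTranslate (a : Fin 2 → K) (ha : ∀ i, a i ^ p = a i) :
    FractionRing (amRing p K c) ≃+* FractionRing (amRing p K c) :=
  IsFractionRing.ringEquivOfRingEquiv (amTranslate c a ha)

lemma commute_amFieldTranslate (ha : ∀ i, a i ^ p = a i) (hb : ∀ i, b i ^ p = b i) :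
    Commute (amFieldTranslate c a ha) (amFieldTranslate c b hb) :=
  (commute_amTranslate ha hb).map
    (IsFractionRing.ringEquivOfRingEquivHom (amRing p K c) (FractionRing (amRing p K c)))

lemma amFieldTranslate_algebraMap_mk_X (ha : ∀ i, a i ^ p = a i) (i : Fin 2) :
    amFieldTranslate c a ha (algebraMap (amRing p K c) _ (Ideal.Quotient.mk _ (X i))) =
      algebraMap (amRing p K c) _ (Ideal.Quotient.mk _ (X i)) + algebraMap K _ (a i) := by
  rw [amFieldTranslate, IsFractionRing.ringEquivOfRingEquiv_algebraMap, amTranslate_mk,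
    translate_X, IsScalarTower.algebraMap_apply K (amRing p K c), map_add, map_add]
  rfl

end ArtinMumford

theorem am_u_not_artin_schreier_trivial_general (p : ℕ) (hp : p.Prime) (hodd : Odd p)
    (K : Type*) [Field K] [CharP K p] (c : K)
    [IsDomain (amRing p K c)]
    (x y : FractionRing (amRing p K c))
    (hx : x = algebraMap (amRing p K c) (FractionRing (amRing p K c))
        (Ideal.Quotient.mk (Ideal.span {amPoly p K c}) (X 0)))
    (hy : y = algebraMap (amRing p K c) (FractionRing (amRing p K c))
        (Ideal.Quotient.mk (Ideal.span {amPoly p K c}) (X 1))) :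
    ∀ w : FractionRing (amRing p K c), w ^ p - w ≠ x * y ^ p - x ^ p * y := by
  have : Fact p.Prime := ⟨hp⟩
  have : CharP (FractionRing (amRing p K c)) p :=
    charP_of_injective_algebraMap (algebraMap K _).injective p
  have hsingle (i j : Fin 2) :
      (Pi.single i 1 : Fin 2 → K) j ^ p = (Pi.single i 1 : Fin 2 → K) j := by
    rcases eq_or_ne j i with rfl | hji
    · simp
    · simp [hji, hp.ne_zero]
  subst hx hy
  have hp2 : p ≠ 2 := by rintro rfl; exact absurd hodd (by decide)
  have hcomm := commute_amFieldTranslate (c := c) (hsingle 1) (hsingle 0)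
  refine pow_char_sub_self_ne_of_commute hp2 hcomm ?_ ?_ ?_ ?_
  all_goals rw [amFieldTranslate_algebraMap_mk_X]; simp

/-- In the function field `F` of the Artin–Mumford curve, the element `u = x·yᵖ - xᵖ·y` is not
of the form `wᵖ - w` for any `w ∈ F`. -/
theorem am_u_not_artin_schreier_trivial (p : ℕ) (hp : p.Prime) (hodd : Odd p)
    (K : Type*) [Field K] [IsAlgClosed K] [CharP K p] (c : K) (hc : c ≠ 0)
    [IsDomain (amRing p K c)]
    (x y : FractionRing (amRing p K c))
    (hx : x = algebraMap (amRing p K c) (FractionRing (amRing p K c))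
        (Ideal.Quotient.mk (Ideal.span {amPoly p K c}) (X 0)))
    (hy : y = algebraMap (amRing p K c) (FractionRing (amRing p K c))
        (Ideal.Quotient.mk (Ideal.span {amPoly p K c}) (X 1))) :
    ∀ w : FractionRing (amRing p K c), w ^ p - w ≠ x * y ^ p - x ^ p * y :=
  am_u_not_artin_schreier_trivial_general p hp hodd K c x y hx hy
end

section
/- Let p be an odd prime, K an algebraically closed field of characteristic p, c ∈ K nonzero, F the fraction field of K[X,Y]/((X^p − X)(Y^p − Y) − c) with x, y the images of X, Y, u = x·y^p − x^p·y, and F′ = F[Z]/(Z^p − Z − u) the degree-p field extension of F obtained by adjoining a root z of the irreducible polynomial Z^p − Z − u. Then there exist K-automorphisms g and h of the field F′ determined by g(x) = x+1, g(y) = y, g(z) = z + y and h(x) = x, h(y) = y − 1, h(z) = z + x, and the subgroup of the K-automorphism group of F′ generated by g and h is a non-abelian group of order p³ in which every element σ satisfies σ^p = id (a non-abelian group of order p³ and exponent p). -/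
open MvPolynomial

set_option synthInstance.maxHeartbeats 1000000
set_option maxHeartbeats 1000000

/-!
For `α, β ∈ 𝔽_p` the translation `(x, y) ↦ (x + α, y + β)` preserves the curve, and it changes
`u = x yᵖ - xᵖ y` by `α (yᵖ - y) - β (xᵖ - x) = wᵖ - w` with `w = α y - β x + ε` for any `ε ∈ 𝔽_p`;
hence it extends to `F′` by `z ↦ z + w`. With `(α, β, ε) = (a, -b, e)` these automorphisms compose
like the Heisenberg group of triples over `𝔽_p` with
`(a, b, e) (a', b', e') = (a + a', b + b', e + e' + a b' - a' b)`, and distinct triples move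
`x`, `y` or `z` differently. So `g = (1, 0, 0)` and `h = (0, 1, 0)` generate a faithful copy of this
group (the commutator of `(1, 0, 0)` and `(0, s, 0)` is `(0, 0, 2s)`, and `2` is invertible), which
has order `p³` and exponent `p`, and is non-abelian since `gh = (1, 1, 1) ≠ (1, 1, -1) = hg`.
-/

@[ext] structure Heisenberg (R : Type*) where
  a : R
  b : R
  e : R

namespace Heisenberg

variable {R : Type*}

lemma card_eq : Nat.card (Heisenberg R) = Nat.card R ^ 3 := by
  let coords : Heisenberg R ≃ R × R × R :=
    ⟨fun v => (v.a, v.b, v.e), fun t => ⟨t.1, t.2.1, t.2.2⟩, fun _ => rfl, fun _ => rfl⟩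
  rw [Nat.card_congr coords, Nat.card_prod, Nat.card_prod]
  ring

variable [CommRing R]

instance : Mul (Heisenberg R) :=
  ⟨fun v w => ⟨v.a + w.a, v.b + w.b, v.e + w.e + v.a * w.b - w.a * v.b⟩⟩
instance : One (Heisenberg R) := ⟨⟨0, 0, 0⟩⟩
instance : Inv (Heisenberg R) := ⟨fun v => ⟨-v.a, -v.b, -v.e⟩⟩

@[simp] lemma mul_a (v w : Heisenberg R) : (v * w).a = v.a + w.a := rfl
@[simp] lemma mul_b (v w : Heisenberg R) : (v * w).b = v.b + w.b := rfl
@[simp] lemma mul_e (v w : Heisenberg R) : (v * w).e = v.e + w.e + v.a * w.b - w.a * v.b := rfl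
@[simp] lemma one_a : (1 : Heisenberg R).a = 0 := rfl
@[simp] lemma one_b : (1 : Heisenberg R).b = 0 := rfl
@[simp] lemma one_e : (1 : Heisenberg R).e = 0 := rfl
@[simp] lemma inv_a (v : Heisenberg R) : v⁻¹.a = -v.a := rfl
@[simp] lemma inv_b (v : Heisenberg R) : v⁻¹.b = -v.b := rfl
@[simp] lemma inv_e (v : Heisenberg R) : v⁻¹.e = -v.e := rfl

instance : Group (Heisenberg R) where
  mul_assoc u v w := by ext <;> simp only [mul_a, mul_b, mul_e] <;> ring
  one_mul v := by ext <;> simp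
  mul_one v := by ext <;> simp
  inv_mul_cancel v := by ext <;> simp

lemma pow_eq_mk (v : Heisenberg R) (n : ℕ) : v ^ n = ⟨n * v.a, n * v.b, n * v.e⟩ := by
  induction n with
  | zero => ext <;> simp
  | succ n ih => rw [pow_succ, ih]; ext <;> simp <;> ring

lemma pow_eq_one_of_charP (n : ℕ) [CharP R n] (v : Heisenberg R) : v ^ n = 1 := by
  ext <;> simp [pow_eq_mk]

lemma not_commute_of_two_ne_zero (h2 : (2 : R) ≠ 0) :
    ¬ Commute (⟨1, 0, 0⟩ : Heisenberg R) ⟨0, 1, 0⟩ := by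
  intro h
  have he := congrArg e h.eq
  simp only [mul_e] at he
  exact h2 (by linear_combination he)

lemma closure_eq_top {n : ℕ} [NeZero n] (h2 : IsUnit (2 : ZMod n)) :
    Subgroup.closure {(⟨1, 0, 0⟩ : Heisenberg (ZMod n)), ⟨0, 1, 0⟩} = ⊤ := by
  set H := Subgroup.closure {(⟨1, 0, 0⟩ : Heisenberg (ZMod n)), ⟨0, 1, 0⟩}
  have hA (a : ZMod n) : (⟨a, 0, 0⟩ : Heisenberg (ZMod n)) ∈ H := by
    convert H.pow_mem (Subgroup.subset_closure (Set.mem_insert _ _)) a.val using 1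
    ext <;> simp [pow_eq_mk]
  have hB (b : ZMod n) : (⟨0, b, 0⟩ : Heisenberg (ZMod n)) ∈ H := by
    convert H.pow_mem (Subgroup.subset_closure (Set.mem_insert_of_mem _ rfl)) b.val using 1
    ext <;> simp [pow_eq_mk]
  have hE (e : ZMod n) : (⟨0, 0, e⟩ : Heisenberg (ZMod n)) ∈ H := by
    obtain ⟨s, rfl⟩ : ∃ s, e = 2 * s :=
      ⟨h2.unit⁻¹ * e, by rw [← mul_assoc, IsUnit.mul_val_inv, one_mul]⟩
    convert H.mul_mem (H.mul_mem (H.mul_mem (hA 1) (hB s)) (H.inv_mem (hA 1)))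
      (H.inv_mem (hB s)) using 1
    ext <;> simp; ring
  refine eq_top_iff.mpr fun v _ => ?_
  convert H.mul_mem (H.mul_mem (hA v.a) (hB v.b)) (hE (v.e - v.a * v.b)) using 1
  ext <;> simp

lemma closure_apply_gens_eq_range {n : ℕ} [NeZero n] (h2 : IsUnit (2 : ZMod n)) {G : Type*}
    [Group G] (ρ : Heisenberg (ZMod n) →* G) :
    Subgroup.closure {ρ ⟨1, 0, 0⟩, ρ ⟨0, 1, 0⟩} = ρ.range := by
  rw [← Set.image_pair, ← MonoidHom.map_closure, closure_eq_top h2, MonoidHom.range_eq_map]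

end Heisenberg

namespace MvPolynomial

variable {R σ : Type*} [CommRing R]

noncomputable def translateVars (t : σ → R) : MvPolynomial σ R ≃ₐ[R] MvPolynomial σ R :=
  AlgEquiv.ofAlgHom (aeval fun i => X i + C (t i)) (aeval fun i => X i - C (t i))
    (algHom_ext fun i => by simp) (algHom_ext fun i => by simp)

@[simp] lemma translateVars_X (t : σ → R) (i : σ) : translateVars t (X i) = X i + C (t i) := by
  simp [translateVars]

end MvPolynomial

lemma ZMod.cast_pow_card {p : ℕ} [Fact p.Prime] {R : Type*} [CommRing R] [CharP R p]
    (a : ZMod p) : (a.cast : R) ^ p = a.cast := by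
  rw [← ZMod.cast_pow', ZMod.pow_card]

section ArtinMumford

variable (p : ℕ) (K : Type*) [Field K] (c : K)

abbrev amField : Type _ := FractionRing (amRing p K c)

noncomputable def amX : amField p K c := algebraMap (amRing p K c) _ (Ideal.Quotient.mk _ (X 0))

noncomputable def amY : amField p K c := algebraMap (amRing p K c) _ (Ideal.Quotient.mk _ (X 1))

noncomputable def amU : amField p K c := amX p K c * amY p K c ^ p - amX p K c ^ p * amY p K c

noncomputable def amQ : Polynomial (amField p K c) :=
  Polynomial.X ^ p - Polynomial.X - Polynomial.C (amU p K c)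

abbrev amExt : Type _ := AdjoinRoot (amQ p K c)

lemma amField_algebraMap_mk_C (k : K) :
    algebraMap (amRing p K c) (amField p K c) (Ideal.Quotient.mk _ (C k)) = algebraMap K _ k := by
  rw [← MvPolynomial.algebraMap_eq, Ideal.Quotient.mk_algebraMap, ← IsScalarTower.algebraMap_apply]

lemma degree_amQ [Nontrivial (amField p K c)] (hp : 1 < p) : (amQ p K c).degree = p := by
  have hXp : (Polynomial.X ^ p - Polynomial.X : Polynomial (amField p K c)).degree = p := by
    rw [Polynomial.degree_sub_eq_left_of_degree_lt] <;> simp [hp]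
  rw [amQ, Polynomial.degree_sub_C (by rw [hXp]; exact_mod_cast zero_lt_one.trans hp), hXp]

lemma eval₂_amQ {L : Type*} [CommRing L] (f : amField p K c →+* L) (t : L) :
    (amQ p K c).eval₂ f t = t ^ p - t - f (amU p K c) := by
  simp [amQ]

lemma amRoot_pow_sub :
    AdjoinRoot.root (amQ p K c) ^ p - AdjoinRoot.root (amQ p K c) = AdjoinRoot.of _ (amU p K c) := by
  have h := AdjoinRoot.eval₂_root (amQ p K c)
  rwa [eval₂_amQ, sub_eq_zero] at h

lemma amExt_algHom_ext {B : Type*} [Semiring B] [Algebra K B] {f g : amExt p K c →ₐ[K] B}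
    (hx : f (AdjoinRoot.of _ (amX p K c)) = g (AdjoinRoot.of _ (amX p K c)))
    (hy : f (AdjoinRoot.of _ (amY p K c)) = g (AdjoinRoot.of _ (amY p K c)))
    (hz : f (AdjoinRoot.root _) = g (AdjoinRoot.root _)) : f = g := by
  refine AdjoinRoot.algHom_ext' ?_ hz
  refine IsLocalization.algHom_ext (nonZeroDivisors (amRing p K c)) ?_
  refine Ideal.Quotient.algHom_ext K ?_
  refine MvPolynomial.algHom_ext fun i => ?_
  fin_cases i
  · exact hx
  · exact hy

variable [Fact p.Prime] [CharP K p]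

lemma translateVars_amPoly {α β : K} (hα : α ^ p = α) (hβ : β ^ p = β) :
    translateVars ![α, β] (amPoly p K c) = amPoly p K c := by
  simp only [amPoly, map_sub, map_mul, map_pow, translateVars_X, AlgEquiv.commutes,
    ← algebraMap_eq, Matrix.cons_val_zero, Matrix.cons_val_one]
  rw [add_pow_char, add_pow_char, ← map_pow, ← map_pow, hα, hβ]
  ring

lemma map_translateVars_span_amPoly {α β : K} (hα : α ^ p = α) (hβ : β ^ p = β) :
    (Ideal.span {amPoly p K c}).map (translateVars ![α, β] : MvPolynomial (Fin 2) K →+* _) =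
      Ideal.span {amPoly p K c} := by
  rw [Ideal.map_span, Set.image_singleton]
  exact congrArg (fun P => Ideal.span {P}) (translateVars_amPoly p K c hα hβ)

noncomputable def amRingShift (a b : ZMod p) : amRing p K c ≃ₐ[K] amRing p K c :=
  Ideal.quotientEquivAlg _ _ (translateVars ![(a.cast : K), b.cast])
    (map_translateVars_span_amPoly p K c (ZMod.cast_pow_card a) (ZMod.cast_pow_card b)).symm

noncomputable def amFieldShift (a b : ZMod p) : amField p K c ≃ₐ[K] amField p K c :=
  IsFractionRing.algEquivOfAlgEquiv (amRingShift p K c a b)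

lemma amFieldShift_x (a b : ZMod p) :
    amFieldShift p K c a b (amX p K c) = amX p K c + algebraMap K _ a.cast := by
  simp [amFieldShift, amX, amRingShift, amField_algebraMap_mk_C]

lemma amFieldShift_y (a b : ZMod p) :
    amFieldShift p K c a b (amY p K c) = amY p K c + algebraMap K _ b.cast := by
  simp [amFieldShift, amY, amRingShift, amField_algebraMap_mk_C]

variable [IsDomain (amRing p K c)]

instance : CharP (amField p K c) p := charP_of_injective_algebraMap (algebraMap K _).injective p

instance : Nontrivial (amExt p K c) :=
  AdjoinRoot.nontrivial _ <| by
    rw [degree_amQ p K c (Fact.out : p.Prime).one_lt]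
    exact_mod_cast (Fact.out : p.Prime).ne_zero

instance : CharP (amExt p K c) p := charP_of_injective_algebraMap (algebraMap K _).injective p

lemma amFieldShift_u (a b : ZMod p) :
    amFieldShift p K c a b (amU p K c) = amU p K c
      - algebraMap K _ b.cast * (amX p K c ^ p - amX p K c)
      + algebraMap K _ a.cast * (amY p K c ^ p - amY p K c) := by
  rw [amU, map_sub, map_mul, map_mul, map_pow, map_pow, amFieldShift_x, amFieldShift_y,
    add_pow_char, add_pow_char, ← map_pow, ← map_pow, ZMod.cast_pow_card, ZMod.cast_pow_card]
  ring

noncomputable def amRootShift (v : Heisenberg (ZMod p)) : amExt p K c :=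
  algebraMap K _ v.b.cast * AdjoinRoot.of _ (amX p K c) +
    algebraMap K _ v.a.cast * AdjoinRoot.of _ (amY p K c) + algebraMap K _ v.e.cast

lemma amRootShift_pow_sub (v : Heisenberg (ZMod p)) :
    amRootShift p K c v ^ p - amRootShift p K c v =
      AdjoinRoot.of _ (amFieldShift p K c v.a (-v.b) (amU p K c) - amU p K c) := by
  simp only [amRootShift, amFieldShift_u, add_pow_char, mul_pow, ← map_pow, ZMod.cast_pow_card,
    map_sub, map_add, map_mul, map_neg, AdjoinRoot.algebraMap_eq,
    IsScalarTower.algebraMap_apply K (amField p K c) (amExt p K c), ZMod.cast_neg dvd_rfl]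
  ring

lemma eval₂_amQ_root_add_amRootShift (v : Heisenberg (ZMod p)) :
    (amQ p K c).eval₂ ((IsScalarTower.toAlgHom K (amField p K c) (amExt p K c)).comp
      (amFieldShift p K c v.a (-v.b) : amField p K c →ₐ[K] amField p K c))
      (AdjoinRoot.root _ + amRootShift p K c v) = 0 := by
  have hroot := amRoot_pow_sub p K c
  have hshift := amRootShift_pow_sub p K c v
  rw [eval₂_amQ, add_pow_char]
  simp only [AlgHom.coe_toRingHom, AlgHom.comp_apply, IsScalarTower.coe_toAlgHom',
    AlgEquiv.coe_toAlgHom, AdjoinRoot.algebraMap_eq, map_sub] at hshift ⊢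
  linear_combination hroot + hshift

noncomputable def amAut (v : Heisenberg (ZMod p)) : amExt p K c →ₐ[K] amExt p K c :=
  AdjoinRoot.liftAlgHom (amQ p K c)
    ((IsScalarTower.toAlgHom K (amField p K c) (amExt p K c)).comp
      (amFieldShift p K c v.a (-v.b) : amField p K c →ₐ[K] amField p K c))
    (AdjoinRoot.root _ + amRootShift p K c v) (eval₂_amQ_root_add_amRootShift p K c v)

lemma amAut_of (v : Heisenberg (ZMod p)) (t : amField p K c) :
    amAut p K c v (AdjoinRoot.of _ t) = AdjoinRoot.of _ (amFieldShift p K c v.a (-v.b) t) :=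
  AdjoinRoot.liftAlgHom_of _ _ _ _ t

@[simp] lemma amAut_x (v : Heisenberg (ZMod p)) :
    amAut p K c v (AdjoinRoot.of _ (amX p K c)) =
      AdjoinRoot.of _ (amX p K c) + algebraMap K _ v.a.cast := by
  rw [amAut_of, amFieldShift_x, map_add, ← AdjoinRoot.algebraMap_eq,
    ← IsScalarTower.algebraMap_apply]

@[simp] lemma amAut_y (v : Heisenberg (ZMod p)) :
    amAut p K c v (AdjoinRoot.of _ (amY p K c)) =
      AdjoinRoot.of _ (amY p K c) - algebraMap K _ v.b.cast := by
  rw [amAut_of, amFieldShift_y, map_add, ← AdjoinRoot.algebraMap_eq,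
    ← IsScalarTower.algebraMap_apply, ZMod.cast_neg dvd_rfl, map_neg, sub_eq_add_neg]

@[simp] lemma amAut_root (v : Heisenberg (ZMod p)) :
    amAut p K c v (AdjoinRoot.root _) = AdjoinRoot.root _ + amRootShift p K c v :=
  AdjoinRoot.liftAlgHom_root _ _ _ _

lemma amAut_mul (v w : Heisenberg (ZMod p)) :
    amAut p K c (v * w) = amAut p K c v * amAut p K c w := by
  apply amExt_algHom_ext <;>
    simp only [AlgHom.mul_apply, amAut_x, amAut_y, amAut_root, amRootShift, map_add, map_sub,
      map_mul, AlgHom.commutes, Heisenberg.mul_a, Heisenberg.mul_b, Heisenberg.mul_e,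
      ZMod.cast_add', ZMod.cast_sub', ZMod.cast_mul'] <;>
    ring

lemma amAut_one : amAut p K c 1 = 1 := by
  apply amExt_algHom_ext <;> simp [amRootShift]

noncomputable def amRep : Heisenberg (ZMod p) →* (amExt p K c ≃ₐ[K] amExt p K c) :=
  (AlgEquiv.algHomUnitsEquiv K _).toMonoidHom.comp
    (MonoidHom.toHomUnits ⟨⟨amAut p K c, amAut_one p K c⟩, amAut_mul p K c⟩)

@[simp] lemma amRep_apply (v : Heisenberg (ZMod p)) (t : amExt p K c) :
    amRep p K c v t = amAut p K c v t := rfl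

lemma amRep_injective : Function.Injective (amRep p K c) := by
  refine (injective_iff_map_eq_one _).mpr fun v hv => ?_
  have hcast (t : ZMod p) (ht : (t.cast : K) = 0) : t = 0 :=
    ZMod.castHom_injective K (by simpa using ht)
  have hx := congrArg (· (AdjoinRoot.of _ (amX p K c))) hv
  have hy := congrArg (· (AdjoinRoot.of _ (amY p K c))) hv
  have hz := congrArg (· (AdjoinRoot.root (amQ p K c))) hv
  simp only [amRep_apply, amAut_x, amAut_y, AlgEquiv.one_apply, add_eq_left, sub_eq_self,
    map_eq_zero] at hx hy
  have ha := hcast _ hx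
  have hb := hcast _ hy
  simp only [amRep_apply, amAut_root, amRootShift, ha, hb, ZMod.cast_zero, map_zero, zero_mul,
    add_zero, zero_add, AlgEquiv.one_apply, add_eq_left, map_eq_zero] at hz
  ext
  · exact ha
  · exact hb
  · exact hcast _ hz

end ArtinMumford

theorem am_extension_nonabelian_p_cubed_general (p : ℕ) (hp : p.Prime) (hodd : Odd p)
    (K : Type*) [Field K] [CharP K p] (c : K)
    [IsDomain (amRing p K c)]
    (x y : FractionRing (amRing p K c))
    (hx : x = algebraMap (amRing p K c) (FractionRing (amRing p K c))
        (Ideal.Quotient.mk (Ideal.span {amPoly p K c}) (X 0)))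
    (hy : y = algebraMap (amRing p K c) (FractionRing (amRing p K c))
        (Ideal.Quotient.mk (Ideal.span {amPoly p K c}) (X 1)))
    (u : FractionRing (amRing p K c)) (hu : u = x * y ^ p - x ^ p * y)
    (q : Polynomial (FractionRing (amRing p K c)))
    (hq : q = Polynomial.X ^ p - Polynomial.X - Polynomial.C u)
    (xx yy zz : AdjoinRoot q)
    (hxx : xx = algebraMap (FractionRing (amRing p K c)) (AdjoinRoot q) x)
    (hyy : yy = algebraMap (FractionRing (amRing p K c)) (AdjoinRoot q) y)
    (hzz : zz = AdjoinRoot.root q) :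
    ∃ g h : AdjoinRoot q ≃ₐ[K] AdjoinRoot q,
      g xx = xx + 1 ∧ g yy = yy ∧ g zz = zz + yy ∧
      h xx = xx ∧ h yy = yy - 1 ∧ h zz = zz + xx ∧
      Nat.card (Subgroup.closure ({g, h} : Set (AdjoinRoot q ≃ₐ[K] AdjoinRoot q))) = p ^ 3 ∧
      (¬ ∀ a ∈ Subgroup.closure ({g, h} : Set (AdjoinRoot q ≃ₐ[K] AdjoinRoot q)),
          ∀ b ∈ Subgroup.closure ({g, h} : Set (AdjoinRoot q ≃ₐ[K] AdjoinRoot q)),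
            a * b = b * a) ∧
      (∀ σ ∈ Subgroup.closure ({g, h} : Set (AdjoinRoot q ≃ₐ[K] AdjoinRoot q)), σ ^ p = 1) := by
  have : Fact p.Prime := ⟨hp⟩
  have h2 : (2 : ZMod p) ≠ 0 := Ring.two_ne_zero <| by
    rw [ZMod.ringChar_zmod_n]; rintro rfl; exact Nat.not_even_iff_odd.mpr hodd even_two
  obtain rfl : x = amX p K c := hx
  obtain rfl : y = amY p K c := hy
  obtain rfl : u = amU p K c := hu
  obtain rfl : q = amQ p K c := hq
  obtain rfl : xx = AdjoinRoot.of _ (amX p K c) := hxx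
  obtain rfl : yy = AdjoinRoot.of _ (amY p K c) := hyy
  subst hzz
  set ρ := amRep p K c
  have hρ : Function.Injective ρ := amRep_injective p K c
  refine ⟨ρ ⟨1, 0, 0⟩, ρ ⟨0, 1, 0⟩, ?_⟩
  rw [Heisenberg.closure_apply_gens_eq_range (Ne.isUnit h2)]
  refine ⟨?_, ?_, ?_, ?_, ?_, ?_, ?card, ?nonabelian, ?exponent⟩
  case card =>
    rw [Nat.card_congr (MonoidHom.ofInjective hρ).toEquiv.symm, Heisenberg.card_eq, Nat.card_zmod]
  case nonabelian =>
    intro h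
    refine Heisenberg.not_commute_of_two_ne_zero h2 (hρ ?_)
    rw [map_mul, map_mul]
    exact h _ ⟨_, rfl⟩ _ ⟨_, rfl⟩
  case exponent =>
    rintro _ ⟨v, rfl⟩
    rw [← map_pow, Heisenberg.pow_eq_one_of_charP, map_one]
  all_goals simp [ρ, amRootShift]

/-- On the degree-`p` extension `F′ = F[Z]/(Zᵖ - Z - u)` of the function field `F` of the
Artin–Mumford curve, there are `K`-automorphisms `g, h` with `g(x) = x+1`, `g(y) = y`,
`g(z) = z+y` and `h(x) = x`, `h(y) = y-1`, `h(z) = z+x`, and `⟨g, h⟩` is a non-abelian group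
of order `p³` and exponent `p`. -/
theorem am_extension_nonabelian_p_cubed (p : ℕ) (hp : p.Prime) (hodd : Odd p)
    (K : Type*) [Field K] [IsAlgClosed K] [CharP K p] (c : K) (hc : c ≠ 0)
    [IsDomain (amRing p K c)]
    (x y : FractionRing (amRing p K c))
    (hx : x = algebraMap (amRing p K c) (FractionRing (amRing p K c))
        (Ideal.Quotient.mk (Ideal.span {amPoly p K c}) (X 0)))
    (hy : y = algebraMap (amRing p K c) (FractionRing (amRing p K c))
        (Ideal.Quotient.mk (Ideal.span {amPoly p K c}) (X 1)))
    (u : FractionRing (amRing p K c)) (hu : u = x * y ^ p - x ^ p * y)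
    (q : Polynomial (FractionRing (amRing p K c)))
    (hq : q = Polynomial.X ^ p - Polynomial.X - Polynomial.C u)
    (hirr : Irreducible q)
    (xx yy zz : AdjoinRoot q)
    (hxx : xx = algebraMap (FractionRing (amRing p K c)) (AdjoinRoot q) x)
    (hyy : yy = algebraMap (FractionRing (amRing p K c)) (AdjoinRoot q) y)
    (hzz : zz = AdjoinRoot.root q) :
    ∃ g h : AdjoinRoot q ≃ₐ[K] AdjoinRoot q,
      g xx = xx + 1 ∧ g yy = yy ∧ g zz = zz + yy ∧
      h xx = xx ∧ h yy = yy - 1 ∧ h zz = zz + xx ∧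
      Nat.card (Subgroup.closure ({g, h} : Set (AdjoinRoot q ≃ₐ[K] AdjoinRoot q))) = p ^ 3 ∧
      (¬ ∀ a ∈ Subgroup.closure ({g, h} : Set (AdjoinRoot q ≃ₐ[K] AdjoinRoot q)),
          ∀ b ∈ Subgroup.closure ({g, h} : Set (AdjoinRoot q ≃ₐ[K] AdjoinRoot q)),
            a * b = b * a) ∧
      (∀ σ ∈ Subgroup.closure ({g, h} : Set (AdjoinRoot q ≃ₐ[K] AdjoinRoot q)), σ ^ p = 1) :=
  am_extension_nonabelian_p_cubed_general p hp hodd K c x y hx hy u hu q hq xx yy zz hxx hyy hzz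
end

section
/- Let p ≥ 3 be a prime and let h ≥ 1 and g ≥ 2 be integers. If p^h·(p² − p − 1) > p²·(g − 1) and (p − 1)·p^h ≤ p·g, then h = 1 and g = p − 1. -/
/-! Write `q = p ^ h`. If `(p - 1) q ≤ p g`, then `p² (g - 1) ≥ p (p - 1) q - p²`, so the strict
inequality `q (p² - p - 1) > p² (g - 1)` forces `q < p²`, that is `h = 1`.
For `q = p` the two inequalities read `p - 1 ≤ g` and `p (g - 1) < p (p - 1)`. -/

namespace StichtenothNumerics

variable {p q g : ℕ}

theorem lt_sq (hp : 1 < p) (H1 : q * (p ^ 2 - p - 1) > p ^ 2 * (g - 1))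
    (H2 : (p - 1) * q ≤ p * g) : q < p ^ 2 := by
  have hsq : q * (p ^ 2 - p - 1) + q = p * (p - 1) * q := by
    have : p ^ 2 - p - 1 + 1 = p * (p - 1) := by
      rw [Nat.mul_sub_one, sq]
      have : p < p * p := Nat.lt_mul_self_iff.mpr hp
      omega
    rw [← this]
    ring
  have hg : p ^ 2 * g ≤ p ^ 2 * (g - 1) + p ^ 2 := by
    rw [← Nat.mul_succ]
    exact Nat.mul_le_mul_left _ (by omega)
  have hpq : p * (p - 1) * q ≤ p ^ 2 * g := by
    rw [sq, mul_assoc, mul_assoc]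
    exact Nat.mul_le_mul_left _ H2
  omega

theorem eq_sub_one (hp : 1 < p) (H1 : p * (p ^ 2 - p - 1) > p ^ 2 * (g - 1))
    (H2 : (p - 1) * p ≤ p * g) : g = p - 1 := by
  have hp0 : 0 < p := by omega
  have hge : p - 1 ≤ g := Nat.le_of_mul_le_mul_left (by rwa [mul_comm]) hp0
  have hlt : p * (g - 1) < p * (p - 1) := by
    rw [sq, mul_assoc] at H1
    have hmul : p * (p - 1) = p * p - p := Nat.mul_sub_one p p
    have := Nat.lt_of_mul_lt_mul_left H1
    omega
  have := Nat.lt_of_mul_lt_mul_left hlt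
  omega

end StichtenothNumerics

theorem stichtenoth_numerics_general (p h g : ℕ) (hp : p.Prime)
    (hh : 1 ≤ h)
    (H1 : p ^ h * (p ^ 2 - p - 1) > p ^ 2 * (g - 1))
    (H2 : (p - 1) * p ^ h ≤ p * g) :
    h = 1 ∧ g = p - 1 := by
  have hlt : h < 2 :=
    (Nat.pow_lt_pow_iff_right hp.one_lt).mp (StichtenothNumerics.lt_sq hp.one_lt H1 H2)
  obtain rfl : h = 1 := by omega
  rw [pow_one] at H1 H2
  exact ⟨rfl, StichtenothNumerics.eq_sub_one hp.one_lt H1 H2⟩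

/-- Numerical core of the paper's Lemma: if `p ≥ 3` is prime, `h ≥ 1`, `g ≥ 2`,
`p^h (p² - p - 1) > p² (g - 1)` and `(p - 1) p^h ≤ p g`, then `h = 1` and `g = p - 1`. -/
theorem stichtenoth_numerics (p h g : ℕ) (hp : p.Prime) (hp3 : 3 ≤ p)
    (hh : 1 ≤ h) (hg : 2 ≤ g)
    (H1 : p ^ h * (p ^ 2 - p - 1) > p ^ 2 * (g - 1))
    (H2 : (p - 1) * p ^ h ≤ p * g) :
    h = 1 ∧ g = p - 1 :=
  stichtenoth_numerics_general p h g hp hh H1 H2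
end

section
/- Let p ≥ 3 be a prime, let n ≥ 1 be an integer and set s = pⁿ. Let γ ≥ 2, γ̄ ≥ 0 and k ≥ 0 be integers, and let ℓ₁, …, ℓ_k be powers of p satisfying p ≤ ℓᵢ ≤ s/p for each i. If γ − 1 = s·(γ̄ − 1) + Σ_{i=1}^{k}(s − ℓᵢ) and p²·(γ − 1) < (p² − p − 1)·s, then γ̄ = 0, k = 2, and ℓ₁ = ℓ₂ = s/p. -/
/-! Write `L = ∑ ℓᵢ`, so that `γ - 1 = s(γ̄ + k - 1) - L`. Since `p ℓᵢ ≤ s`, `p² L ≤ p k s`, and the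
hypothesis `p²(γ - 1) < (p² - p - 1)s` forces `p(γ̄ + k - 2) + 2 ≤ k`; with `γ̄ + k ≥ 2`
(because `γ ≥ 2`) this leaves only `γ̄ = 0`, `k = 2`. Then `γ - 1 = s - ℓ₁ - ℓ₂`, and the same
hypothesis gives `s < p² ℓᵢ`; a power of `p` in `(s/p², s/p]` can only be `s/p`. -/

theorem pow_eq_pow_div_of_le_div_of_lt_sq_mul {p m n : ℕ} (hp : 1 < p)
    (hle : p ^ m ≤ p ^ n / p) (hlt : p ^ n < p ^ 2 * p ^ m) : p ^ m = p ^ n / p := by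
  have hlo : m + 1 ≤ n := by
    rw [← Nat.pow_le_pow_iff_right hp, pow_succ]
    exact Nat.mul_le_of_le_div p _ _ hle
  have hhi : n < m + 2 := by
    rwa [← Nat.pow_lt_pow_iff_right hp, pow_add, mul_comm]
  obtain rfl : n = m + 1 := by omega
  rw [pow_succ, Nat.mul_div_cancel _ (by omega)]

theorem quotient_prank_eq_zero_and_card_eq_two {p s γ γb k L : ℤ} (hp : 2 ≤ p) (hγb : 0 ≤ γb)
    (hL : 0 ≤ L) (hLp : L * p ≤ k * s) (heq : γ - 1 = s * (γb + k - 1) - L) (hγ : 1 ≤ γ - 1)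
    (hineq : p ^ 2 * (γ - 1) < (p ^ 2 - p - 1) * s) : γb = 0 ∧ k = 2 := by
  have hs : 0 < s := by
    have hc : 0 < p ^ 2 - p - 1 := by nlinarith
    exact pos_of_mul_pos_right (by nlinarith : 0 < (p ^ 2 - p - 1) * s) hc.le
  have hlower : p * s * (p * (γb + k - 1) - k) ≤ p ^ 2 * (γ - 1) := by
    rw [heq]; nlinarith
  have hA : p * (γb + k - 1) - k < p - 1 :=
    lt_of_mul_lt_mul_left (by nlinarith : p * s * (p * (γb + k - 1) - k) < p * s * (p - 1))
      (by positivity)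
  have hcount : 2 ≤ γb + k := by
    have : 0 < s * (γb + k - 1) := by linarith
    linarith [pos_of_mul_pos_right this hs.le]
  have key : (p - 1) * (γb + k - 2) + γb ≤ 0 := by linarith
  constructor <;> nlinarith

theorem eq_pow_div_of_sum_fin_two {p n : ℕ} {γ : ℤ} {ℓ : Fin 2 → ℕ} (hp : 1 < p)
    (hℓpow : ∀ i, ∃ m : ℕ, ℓ i = p ^ m) (hℓhi : ∀ i, ℓ i ≤ p ^ n / p)
    (heq : γ - 1 = p ^ n - ℓ 0 - ℓ 1) (hineq : p ^ 2 * (γ - 1) < (p ^ 2 - p - 1) * p ^ n)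
    (i : Fin 2) : ℓ i = p ^ n / p := by
  have hmul : ∀ j, (ℓ j : ℤ) * p ≤ p ^ n := fun j => by
    exact_mod_cast Nat.mul_le_of_le_div p _ _ (hℓhi j)
  have hlt : p ^ n < p ^ 2 * ℓ i := by
    suffices (p : ℤ) ^ n < p ^ 2 * ℓ i by exact_mod_cast this
    obtain rfl | rfl : i = 0 ∨ i = 1 := by omega
    · nlinarith [hmul 1]
    · nlinarith [hmul 0]
  obtain ⟨m, hm⟩ := hℓpow i
  rw [hm] at hlt ⊢
  exact pow_eq_pow_div_of_le_div_of_lt_sq_mul hp (hm ▸ hℓhi i) hlt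

theorem deuring_shafarevich_numerics_general (p n : ℕ) (hp : p.Prime)
    (s : ℕ) (hs : s = p ^ n)
    (γ γb k : ℕ) (hγ : 2 ≤ γ)
    (ℓ : Fin k → ℕ)
    (hℓpow : ∀ i, ∃ m : ℕ, ℓ i = p ^ m)
    (hℓhi : ∀ i, ℓ i ≤ s / p)
    (heq : (γ : ℤ) - 1 = (s : ℤ) * ((γb : ℤ) - 1) + ∑ i : Fin k, ((s : ℤ) - (ℓ i : ℤ)))
    (hineq : p ^ 2 * (γ - 1) < (p ^ 2 - p - 1) * s) :
    γb = 0 ∧ k = 2 ∧ ∀ i, ℓ i = s / p := by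
  subst hs
  have hineqZ : (p : ℤ) ^ 2 * (γ - 1) < ((p : ℤ) ^ 2 - p - 1) * p ^ n := by
    have : p + 1 ≤ p ^ 2 := by nlinarith [hp.two_le]
    zify [(by omega : 1 ≤ γ), (by omega : p ≤ p ^ 2), (by omega : 1 ≤ p ^ 2 - p)] at hineq
    exact hineq
  have hsum : (∑ i, ℓ i) * p ≤ k * p ^ n := by
    simpa [Finset.sum_mul] using
      Finset.sum_le_card_nsmul Finset.univ _ _ fun i _ => Nat.mul_le_of_le_div p _ _ (hℓhi i)
  have heqL : (γ : ℤ) - 1 = p ^ n * (γb + k - 1) - ∑ i, (ℓ i : ℤ) := by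
    rw [heq, Finset.sum_sub_distrib, Finset.sum_const, Finset.card_univ, Fintype.card_fin,
      nsmul_eq_mul]
    push_cast; ring
  obtain ⟨hγb0, hk2⟩ := quotient_prank_eq_zero_and_card_eq_two (by exact_mod_cast hp.two_le)
    (Nat.cast_nonneg γb) (by positivity) (by exact_mod_cast hsum) heqL
    (by linarith [(by exact_mod_cast hγ : (2 : ℤ) ≤ γ)]) hineqZ
  obtain rfl : k = 2 := by exact_mod_cast hk2
  refine ⟨by exact_mod_cast hγb0, rfl, eq_pow_div_of_sum_fin_two hp.one_lt hℓpow hℓhi ?_ hineqZ⟩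
  rw [heqL, Fin.sum_univ_two, hγb0]
  ring

/-- Numerical core of the paper's Proposition via the Deuring–Shafarevich formula: with
`s = pⁿ`, `γ ≥ 2`, short orbit sizes `ℓᵢ` (powers of `p` with `p ≤ ℓᵢ ≤ s/p`), if
`γ - 1 = s(γ̄ - 1) + Σᵢ (s - ℓᵢ)` and `p²(γ - 1) < (p² - p - 1)s`, then `γ̄ = 0`, `k = 2`
and `ℓ₁ = ℓ₂ = s/p`. -/
theorem deuring_shafarevich_numerics (p n : ℕ) (hp : p.Prime) (hp3 : 3 ≤ p) (hn : 1 ≤ n)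
    (s : ℕ) (hs : s = p ^ n)
    (γ γb k : ℕ) (hγ : 2 ≤ γ)
    (ℓ : Fin k → ℕ)
    (hℓpow : ∀ i, ∃ m : ℕ, ℓ i = p ^ m)
    (hℓlo : ∀ i, p ≤ ℓ i) (hℓhi : ∀ i, ℓ i ≤ s / p)
    (heq : (γ : ℤ) - 1 = (s : ℤ) * ((γb : ℤ) - 1) + ∑ i : Fin k, ((s : ℤ) - (ℓ i : ℤ)))
    (hineq : p ^ 2 * (γ - 1) < (p ^ 2 - p - 1) * s) :
    γb = 0 ∧ k = 2 ∧ ∀ i, ℓ i = s / p :=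
  deuring_shafarevich_numerics_general p n hp s hs γ γb k hγ ℓ hℓpow hℓhi heq hineq
end

section
/- Let p be an odd prime, let m ≥ 1 be an integer, and set q = p^m. Let μ = 3 if 3 divides q + 1 and μ = 1 otherwise. If (q + 1)/(2μ) divides p − 2, then q = 5 or q = 17. -/
/-!
Write `d = (q + 1) / (2μ)`; since `q` is odd, `2μ ∣ q + 1`, so `q + 1 = 2μd ≤ 6(p - 2) < p²`,
which forces `q = p`. Then `d` divides both `p + 1` and `p - 2`, hence `d ∣ 3`, and
`p + 1 = 2μd` with `μ, d ∈ {1, 3}` leaves only `p = 5` and `p = 17`.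
-/

lemma two_mul_ite_dvd_add_one {q : ℕ} (hq : Odd q) :
    2 * (if 3 ∣ q + 1 then 3 else 1) ∣ q + 1 := by
  have h2 : 2 ∣ q + 1 := (hq.add_odd odd_one).two_dvd
  split_ifs with h3
  · exact Nat.Coprime.mul_dvd_of_dvd_of_dvd (by norm_num) h2 h3
  · simpa using h2

lemma le_mul_of_div_dvd {n k c : ℕ} (hk : k ∣ n) (hc : 0 < c) (h : n / k ∣ c) :
    n ≤ k * c :=
  calc n = k * (n / k) := (Nat.mul_div_cancel' hk).symm
    _ ≤ k * c := Nat.mul_le_mul_left k (Nat.le_of_dvd hc h)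

lemma dvd_three_of_dvd_add_one_of_dvd_sub_two {d p : ℕ} (hp : 2 ≤ p) (h₁ : d ∣ p + 1)
    (h₂ : d ∣ p - 2) : d ∣ 3 := by
  have := Nat.dvd_sub h₁ h₂
  rwa [show p + 1 - (p - 2) = 3 by omega] at this

lemma pow_eq_self_of_pow_lt_sq {p m : ℕ} (hp : 1 < p) (hm : 1 ≤ m) (h : p ^ m < p ^ 2) :
    p ^ m = p := by
  have : m < 2 := (Nat.pow_lt_pow_iff_right hp).1 h
  rw [show m = 1 by omega, pow_one]

lemma eq_five_or_seventeen_of_div_dvd_sub_two {p : ℕ} (hp : 3 ≤ p) (hodd : Odd p)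
    (hdvd : (p + 1) / (2 * (if 3 ∣ p + 1 then 3 else 1)) ∣ p - 2) : p = 5 ∨ p = 17 := by
  obtain ⟨d, hd⟩ := two_mul_ite_dvd_add_one hodd
  rw [Nat.div_eq_of_eq_mul_left (by split_ifs <;> norm_num) (hd.trans (mul_comm _ _))] at hdvd
  have hd3 : d ∣ 3 :=
    dvd_three_of_dvd_add_one_of_dvd_sub_two (by omega) (Dvd.intro_left _ hd.symm) hdvd
  have : d = 1 ∨ d = 3 := (Nat.dvd_prime Nat.prime_three).1 hd3
  split_ifs at hd with h3 <;> omega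

/-- Arithmetic claim in the lemma ruling out `PSU(3,q)`: for an odd prime `p`, `q = p^m`
with `m ≥ 1`, and `μ = 3` if `3 ∣ q + 1`, `μ = 1` otherwise, if `(q+1)/(2μ)` divides `p - 2`
then `q = 5` or `q = 17`. -/
theorem psu3_arith (p m : ℕ) (hp : p.Prime) (hodd : Odd p) (hm : 1 ≤ m)
    (q : ℕ) (hq : q = p ^ m)
    (μ : ℕ) (hμ : μ = if 3 ∣ q + 1 then 3 else 1)
    (hdvd : (q + 1) / (2 * μ) ∣ p - 2) :
    q = 5 ∨ q = 17 := by
  have hp3 : 3 ≤ p := by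
    have := hp.two_le
    rcases hodd with ⟨k, rfl⟩
    omega
  have hqodd : Odd q := hq ▸ hodd.pow
  have hμ3 : μ ≤ 3 := by rw [hμ]; split_ifs <;> norm_num
  have hbound : q + 1 ≤ 2 * μ * (p - 2) :=
    le_mul_of_div_dvd (hμ ▸ two_mul_ite_dvd_add_one hqodd) (by omega) hdvd
  have hqp : q = p := by
    rw [hq] at hbound ⊢
    refine pow_eq_self_of_pow_lt_sq (by omega) hm ?_
    have : 2 * μ * (p - 2) < p ^ 2 := by
      calc 2 * μ * (p - 2) ≤ 6 * (p - 2) := by gcongr; omega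
        _ < p ^ 2 := by zify [show 2 ≤ p by omega]; nlinarith
    omega
  subst hμ hqp
  exact eq_five_or_seventeen_of_div_dvd_sub_two hp3 hodd hdvd
end

section
/- Let p be an odd prime, let m ≥ 1 be an integer, and set q = p^m. Let μ = 3 if 3 divides q − 1 and μ = 1 otherwise. If (q − 1)/(2μ) divides p − 2, then q = 3 or q = 7. -/
/-!
Write `d = (q - 1)/(2μ)`, so that `q - 1 = 2μ d` with `2μ ≤ 6`. Since `d` divides `p - 2 > 0`, we
have `1 ≤ d ≤ p - 2`, hence `3 ≤ q ≤ 6p - 11 < p²`, which forces `m = 1`, i.e. `q = p`. Then `d`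
divides both `p - 1` and `p - 2`, so `d = 1` and `p = 2μ + 1 ∈ {3, 7}`.
-/

lemma two_mul_ite_three_dvd_sub_one {q : ℕ} (hq : Odd q) :
    2 * (if 3 ∣ q - 1 then 3 else 1) ∣ q - 1 := by
  have h2 : 2 ∣ q - 1 := by
    obtain ⟨k, rfl⟩ := hq
    simp
  split_ifs with h3
  · exact Nat.Coprime.mul_dvd_of_dvd_of_dvd (by norm_num) h2 h3
  · simpa using h2

lemma lt_sq_of_sub_one_le_six_mul {p q : ℕ} (hp : 2 ≤ p) (h : q - 1 ≤ 6 * (p - 2)) :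
    q < p ^ 2 := by
  rcases (by omega : q + 11 ≤ 6 * p ∨ q ≤ 1) with hq | hq
  · nlinarith [sq_nonneg ((p : ℤ) - 3)]
  · nlinarith

lemma eq_one_of_one_lt_pow_of_pow_lt_sq {p m : ℕ} (hp : 1 < p) (h₁ : 1 < p ^ m)
    (h₂ : p ^ m < p ^ 2) : m = 1 := by
  have := (Nat.pow_lt_pow_iff_right hp).mp h₂
  have : m ≠ 0 := by
    rintro rfl
    simp at h₁
  omega

lemma eq_one_of_dvd_sub_one_of_dvd_sub_two {d n : ℕ} (hn : 2 ≤ n) (h₁ : d ∣ n - 1)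
    (h₂ : d ∣ n - 2) : d = 1 := by
  have h := Nat.dvd_sub h₁ h₂
  rwa [show n - 1 - (n - 2) = 1 by omega, Nat.dvd_one] at h

theorem psl3_arith_general (p m : ℕ) (hp : p.Prime) (hodd : Odd p)
    (q : ℕ) (hq : q = p ^ m)
    (μ : ℕ) (hμ : μ = if 3 ∣ q - 1 then 3 else 1)
    (hdvd : (q - 1) / (2 * μ) ∣ p - 2) :
    q = 3 ∨ q = 7 := by
  have hp3 : 3 ≤ p := by
    have := hp.two_le
    obtain ⟨k, rfl⟩ := hodd
    omega
  have hμ13 : μ = 1 ∨ μ = 3 := by split_ifs at hμ <;> simp [hμ]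
  have h2μ : 2 * μ ∣ q - 1 := hμ ▸ two_mul_ite_three_dvd_sub_one (hq ▸ hodd.pow)
  set d := (q - 1) / (2 * μ)
  have hqd : q - 1 = d * (2 * μ) := (Nat.div_mul_cancel h2μ).symm
  have hd_pos : 0 < d := Nat.pos_of_dvd_of_pos hdvd (by omega)
  have hd_le : d ≤ p - 2 := Nat.le_of_dvd (by omega) hdvd
  have hq_lt : q < p ^ 2 := by
    refine lt_sq_of_sub_one_le_six_mul (by omega) ?_
    rw [hqd, mul_comm 6]
    exact Nat.mul_le_mul hd_le (by omega)
  have hq_gt : 1 < q := by rcases hμ13 with rfl | rfl <;> omega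
  have hm : m = 1 := eq_one_of_one_lt_pow_of_pow_lt_sq (by omega) (hq ▸ hq_gt) (hq ▸ hq_lt)
  rw [hm, pow_one] at hq
  subst hq
  have hd1 : d = 1 := eq_one_of_dvd_sub_one_of_dvd_sub_two (by omega) (Nat.div_dvd_of_dvd h2μ) hdvd
  rw [hd1, one_mul] at hqd
  rcases hμ13 with rfl | rfl <;> omega

/-- Arithmetic claim in the lemma ruling out `PSL(3,q)`: for an odd prime `p`, `q = p^m`
with `m ≥ 1`, and `μ = 3` if `3 ∣ q - 1`, `μ = 1` otherwise, if `(q-1)/(2μ)` divides `p - 2`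
then `q = 3` or `q = 7`. -/
theorem psl3_arith (p m : ℕ) (hp : p.Prime) (hodd : Odd p) (hm : 1 ≤ m)
    (q : ℕ) (hq : q = p ^ m)
    (μ : ℕ) (hμ : μ = if 3 ∣ q - 1 then 3 else 1)
    (hdvd : (q - 1) / (2 * μ) ∣ p - 2) :
    q = 3 ∨ q = 7 :=
  psl3_arith_general p m hp hodd q hq μ hμ hdvd
end

section
/- Let p be a prime, K a field of characteristic p, and f ∈ K[X,Y] a polynomial whose degree in X is at most p and whose degree in Y is at most p. Suppose f(X+1, Y) = f(X, Y) and f(X, Y+1) = f(X, Y), and that the one-variable polynomials f(X, 0) and f(0, Y) each have degree at most p − 1. Then there exist c, u ∈ K such that f = c·(X^p − X)(Y^p − Y) + u. -/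
/-!
If `g(X + 1) = g` in characteristic `p`, comparing the coefficients of `X ^ (deg g - 1)` on both
sides gives `deg g · lc g = 0`, so `p ∣ deg g`. For `deg g ≤ p` this leaves `deg g ∈ {0, p}`, and
subtracting `lc g · (X ^ p - X)`, which is translation invariant by Frobenius, shows
`g = a (X ^ p - X) + b`. Applied to `f` as a polynomial in `X` over `K[Y]`, and then to its two
coefficients as polynomials in `Y`, this puts `f` in the span of `1`, `X ^ p - X`, `Y ^ p - Y` and
their product; the conditions on `f(X, 0)` and `f(0, Y)` kill the two linear terms.
-/

namespace Polynomial

variable {R : Type*}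

theorem coeff_taylor_natDegree_sub_one [CommSemiring R] (f : R[X]) (r : R) :
    (taylor r f).coeff (f.natDegree - 1)
      = f.coeff (f.natDegree - 1) + f.natDegree * r * f.leadingCoeff := by
  rcases Nat.eq_zero_or_pos f.natDegree with h | h
  · simp [h, taylor_coeff_zero, eval_eq_sum_range]
  have hle : (hasseDeriv (f.natDegree - 1) f).natDegree ≤ 1 :=
    (natDegree_hasseDeriv_le f _).trans (by omega)
  have hn : 1 + (f.natDegree - 1) = f.natDegree := by omega
  rw [taylor_coeff, eq_X_add_C_of_natDegree_le_one hle]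
  simp only [eval_add, eval_mul, eval_C, eval_X, hasseDeriv_coeff, zero_add, Nat.choose_self,
    Nat.cast_one, one_mul, hn, leadingCoeff]
  rw [Nat.choose_symm_of_eq_add (by omega : f.natDegree = f.natDegree - 1 + 1),
    Nat.choose_one_right]
  ring

theorem natDegree_cast_eq_zero_of_taylor_eq_self [CommRing R] [NoZeroDivisors R] {f : R[X]}
    {r : R} (hr : r ≠ 0) (hf : taylor r f = f) : (f.natDegree : R) = 0 := by
  rcases eq_or_ne f 0 with rfl | hf0
  · simp
  have h := coeff_taylor_natDegree_sub_one f r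
  rw [hf, left_eq_add, mul_eq_zero, mul_eq_zero] at h
  simpa [hr, hf0] using h

theorem taylor_one_X_pow_sub_X [CommRing R] {p : ℕ} [Fact p.Prime] [CharP R p] :
    taylor 1 (X ^ p - X : R[X]) = X ^ p - X := by
  rw [map_sub, taylor_X_pow, taylor_X, add_pow_char, ← C_pow, one_pow]
  ring

theorem eq_C_mul_X_pow_sub_X_add_C_of_taylor_one_eq_self [CommRing R] [IsDomain R] {p : ℕ}
    [Fact p.Prime] [CharP R p] {f : R[X]} (hd : f.natDegree ≤ p) (hf : taylor 1 f = f) :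
    f = C (f.coeff p) * (X ^ p - X) + C (f.coeff 0) := by
  have hp : 1 < p := (Fact.out : p.Prime).one_lt
  set g := f - C (f.coeff p) * (X ^ p - X) with hg
  have hg_inv : taylor 1 g = g := by
    rw [hg, map_sub, taylor_mul, taylor_C, taylor_one_X_pow_sub_X, hf]
  have hg_lt : g.natDegree < p := by
    refine (natDegree_le_pred ?_ ?_).trans_lt (Nat.sub_one_lt_of_lt hp)
    · refine (natDegree_sub_le _ _).trans (max_le hd ?_)
      refine natDegree_C_mul_le _ _ |>.trans ((natDegree_sub_le _ _).trans ?_)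
      simp [hp.le]
    · simp [hg, coeff_X, hp.ne]
  have hg0 : g.natDegree = 0 := Nat.eq_zero_of_dvd_of_lt
    ((CharP.cast_eq_zero_iff R p _).1 (natDegree_cast_eq_zero_of_taylor_eq_self one_ne_zero hg_inv))
    hg_lt
  have hg_coeff : g.coeff 0 = f.coeff 0 := by
    simp [hg, coeff_X_pow, (zero_lt_one.trans hp).ne]
  have := eq_C_of_natDegree_eq_zero hg0
  rw [hg_coeff, hg] at this
  linear_combination this

end Polynomial

namespace MvPolynomial

section FinSuccEquiv

variable {R : Type*} [CommSemiring R] {n : ℕ}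

theorem finSuccEquiv_C (a : R) : finSuccEquiv R n (C a) = Polynomial.C (C a) :=
  (finSuccEquiv R n).commutes a

theorem finSuccEquiv_rename_succ (q : MvPolynomial (Fin n) R) :
    finSuccEquiv R n (rename Fin.succ q) = Polynomial.C q := by
  induction q using MvPolynomial.induction_on with
  | C a => simp [finSuccEquiv_C]
  | add p q hp hq => simp [hp, hq]
  | mul_X p i hp => simp [hp, finSuccEquiv_X_succ]

theorem finSuccEquiv_aeval_cons_X_zero_add_one (f : MvPolynomial (Fin (n + 1)) R) :
    finSuccEquiv R n (aeval (Fin.cons (X 0 + 1) (X ∘ Fin.succ) : Fin (n + 1) → _) f)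
      = Polynomial.taylor 1 (finSuccEquiv R n f) := by
  suffices (finSuccEquiv R n).toAlgHom.comp (aeval (Fin.cons (X 0 + 1) (X ∘ Fin.succ)))
      = ((Polynomial.taylorAlgHom 1).restrictScalars R).comp (finSuccEquiv R n).toAlgHom from
    congr($this f)
  refine algHom_ext fun i => Fin.cases ?_ (fun j => ?_) i
  · simp [finSuccEquiv_X_zero]
  · simp [finSuccEquiv_X_succ]

theorem finSuccEquiv_aeval_cons_X_zero (v : Fin n → MvPolynomial (Fin n) R)
    (f : MvPolynomial (Fin (n + 1)) R) :
    finSuccEquiv R n (aeval (Fin.cons (X 0) (rename Fin.succ ∘ v) : Fin (n + 1) → _) f)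
      = (finSuccEquiv R n f).map (aeval v : MvPolynomial (Fin n) R →ₐ[R] _).toRingHom := by
  suffices (finSuccEquiv R n).toAlgHom.comp (aeval (Fin.cons (X 0) (rename Fin.succ ∘ v)))
      = (Polynomial.mapAlgHom (aeval v)).comp (finSuccEquiv R n).toAlgHom from
    congr($this f)
  refine algHom_ext fun i => Fin.cases ?_ (fun j => ?_) i
  · simp [finSuccEquiv_X_zero]
  · simp [finSuccEquiv_X_succ, finSuccEquiv_rename_succ]

end FinSuccEquiv

variable {R : Type*} [CommRing R]

theorem exists_eq_C_mul_X_pow_sub_X_add_C_of_aeval_eq_self [IsDomain R] {p : ℕ} [Fact p.Prime]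
    [CharP R p] {f : MvPolynomial (Fin 1) R} (hd : f.degreeOf 0 ≤ p)
    (hf : aeval ![X 0 + 1] f = f) : ∃ a b : R, f = C a * (X 0 ^ p - X 0) + C b := by
  have hshift : (![X 0 + 1] : Fin 1 → MvPolynomial (Fin 1) R)
      = Fin.cons (X 0 + 1) (X ∘ Fin.succ) := by
    ext i : 1; fin_cases i; rfl
  set g := finSuccEquiv R 0 f with hg_def
  have hg := Polynomial.eq_C_mul_X_pow_sub_X_add_C_of_taylor_one_eq_self
    (f := g) (by rwa [natDegree_finSuccEquiv])
    (by rw [← finSuccEquiv_aeval_cons_X_zero_add_one, ← hshift, hf])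
  obtain ⟨a, ha⟩ := C_surjective (Fin 0) (g.coeff p)
  obtain ⟨b, hb⟩ := C_surjective (Fin 0) (g.coeff 0)
  refine ⟨a, b, (finSuccEquiv R 0).injective ?_⟩
  rw [← hg_def, hg, ← ha, ← hb]
  simp [finSuccEquiv_X_zero, finSuccEquiv_C]

theorem exists_eq_of_aeval_shift_eq_self_fin_two [IsDomain R] {p : ℕ} [Fact p.Prime]
    [CharP R p] {f : MvPolynomial (Fin 2) R} (hdX : f.degreeOf 0 ≤ p) (hdY : f.degreeOf 1 ≤ p)
    (hX : aeval ![X 0 + 1, X 1] f = f) (hY : aeval ![X 0, X 1 + 1] f = f) :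
    ∃ a b c u : R, f = C a * ((X 0 ^ p - X 0) * (X 1 ^ p - X 1)) + C b * (X 0 ^ p - X 0)
      + C c * (X 1 ^ p - X 1) + C u := by
  have hshiftX : (![X 0 + 1, X 1] : Fin 2 → MvPolynomial (Fin 2) R)
      = Fin.cons (X 0 + 1) (X ∘ Fin.succ) := by
    ext i : 1; fin_cases i <;> rfl
  have hshiftY : (![X 0, X 1 + 1] : Fin 2 → MvPolynomial (Fin 2) R)
      = Fin.cons (X 0) (rename Fin.succ ∘ ![X 0 + 1]) := by
    ext i : 1; fin_cases i <;> simp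
  set g := finSuccEquiv R 1 f with hg_def
  have hg := Polynomial.eq_C_mul_X_pow_sub_X_add_C_of_taylor_one_eq_self
    (f := g) (by rwa [natDegree_finSuccEquiv])
    (by rw [← finSuccEquiv_aeval_cons_X_zero_add_one, ← hshiftX, hX])
  have hg_map : g.map (aeval ![X 0 + 1] : MvPolynomial (Fin 1) R →ₐ[R] _).toRingHom = g := by
    rw [← finSuccEquiv_aeval_cons_X_zero, ← hshiftY, hY]
  have hcoeff_inv (i : ℕ) : aeval ![X 0 + 1] (g.coeff i) = g.coeff i := by
    simpa using congr(Polynomial.coeff $hg_map i)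
  obtain ⟨a, b, hA⟩ := exists_eq_C_mul_X_pow_sub_X_add_C_of_aeval_eq_self
    ((degreeOf_coeff_finSuccEquiv f 0 p).trans hdY) (hcoeff_inv p)
  obtain ⟨c, u, hB⟩ := exists_eq_C_mul_X_pow_sub_X_add_C_of_aeval_eq_self
    ((degreeOf_coeff_finSuccEquiv f 0 0).trans hdY) (hcoeff_inv 0)
  refine ⟨a, b, c, u, (finSuccEquiv R 1).injective ?_⟩
  rw [← hg_def, hg, hA, hB]
  have hX1 : finSuccEquiv R 1 (X 1) = Polynomial.C (X 0) := finSuccEquiv_X_succ (j := 0)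
  simp only [map_add, map_mul, map_sub, map_pow, finSuccEquiv_C, finSuccEquiv_X_zero, hX1]
  ring

theorem eq_zero_of_degreeOf_C_mul_X_pow_sub_X_add_C_lt {σ : Type*} {i : σ} {p : ℕ} (hp : 1 < p)
    {b c : R} (h : (C b * (X i ^ p - X i) + C c).degreeOf i < p) : b = 0 := by
  classical
  have hcoeff := notMem_support_iff.1
    (notMem_support_of_degreeOf_lt i (s := Finsupp.single i p) (by simpa using h))
  have h1 : Finsupp.single i 1 ≠ Finsupp.single i p := (Finsupp.single_injective i).ne hp.ne
  have h0 : 0 ≠ Finsupp.single i p := by simp [eq_comm, (zero_lt_one.trans hp).ne']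
  simpa [coeff_X_pow, coeff_X, coeff_C, h0, h1] using hcoeff

end MvPolynomial

open MvPolynomial

/-- Computational core of the paper's genus-4 uniqueness proof: a polynomial
`f ∈ K[X,Y]` of degree at most `p` in each variable, invariant under `X ↦ X+1` and
`Y ↦ Y+1`, and such that `f(X,0)` and `f(0,Y)` have degree at most `p-1`, must be of the
form `c·(X^p - X)(Y^p - Y) + u`. -/
theorem translation_invariant_poly (p : ℕ) (hp : p.Prime)
    (K : Type*) [Field K] [CharP K p]
    (f : MvPolynomial (Fin 2) K)
    (hdX : f.degreeOf 0 ≤ p) (hdY : f.degreeOf 1 ≤ p)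
    (hX1 : aeval ![X 0 + 1, X 1] f = f)
    (hY1 : aeval ![X 0, X 1 + 1] f = f)
    (hX0 : (aeval ![X 0, (0 : MvPolynomial (Fin 2) K)] f).degreeOf 0 ≤ p - 1)
    (h0Y : (aeval ![(0 : MvPolynomial (Fin 2) K), X 1] f).degreeOf 1 ≤ p - 1) :
    ∃ c u : K, f = C c * ((X 0 ^ p - X 0) * (X 1 ^ p - X 1)) + C u := by
  have := Fact.mk hp
  obtain ⟨a, b, c, u, hf⟩ := exists_eq_of_aeval_shift_eq_self_fin_two hdX hdY hX1 hY1
  have hb : b = 0 := by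
    have hf0 : aeval ![X 0, (0 : MvPolynomial (Fin 2) K)] f = C b * (X 0 ^ p - X 0) + C u := by
      rw [hf]; simp [hp.ne_zero]
    exact eq_zero_of_degreeOf_C_mul_X_pow_sub_X_add_C_lt hp.one_lt
      (hf0 ▸ hX0.trans_lt (Nat.sub_one_lt hp.ne_zero))
  have hc : c = 0 := by
    have h0f : aeval ![(0 : MvPolynomial (Fin 2) K), X 1] f = C c * (X 1 ^ p - X 1) + C u := by
      rw [hf]; simp [hp.ne_zero]
    exact eq_zero_of_degreeOf_C_mul_X_pow_sub_X_add_C_lt hp.one_lt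
      (h0f ▸ h0Y.trans_lt (Nat.sub_one_lt hp.ne_zero))
  exact ⟨a, u, by rw [hf, hb, hc]; simp⟩
end
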